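/- The weak dual of a 2-connected outerplanar graph (with respect to any outerplanar embedding) is a tree. -/

import Mathlib

open SimpleGraph

section ZF
variable {V : Type*}

/-- One round of the zero forcing color change rule applied to the blue set `S`. -/
def forceStep (G : SimpleGraph V) (S : Set V) : Set V :=
  S ∪ {w | ∃ u ∈ S, G.Adj u w ∧ ∀ x, G.Adj u x → x ∉ S → x = w}

/-- `S` is a zero forcing set: repeatedly applying the color change rule turns all
vertices blue; equivalently every forcing-closed superset of `S` is everything. -/
def IsZeroForcingSet (G : SimpleGraph V) (S : Set V) : Prop :=
  ∀ T : Set V, S ⊆ T → forceStep G T ⊆ T → T = Set.univ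

/-- The zero forcing number `Z(G)`. -/
noncomputable def zeroForcingNumber (G : SimpleGraph V) [Fintype V] : ℕ :=
  sInf {n | ∃ S : Finset V, S.card = n ∧ IsZeroForcingSet G ↑S}

/-- The list `l` enumerates an induced path of `G` (a single vertex counts). -/
def IsListPath (G : SimpleGraph V) (l : List V) : Prop :=
  l.Nodup ∧ ∀ i j : Fin l.length,
    (G.Adj (l.get i) (l.get j) ↔ (i.val + 1 = j.val ∨ j.val + 1 = i.val))

/-- The set `P` induces a path in `G`. -/
def IsInducedPathSet (G : SimpleGraph V) (P : Set V) : Prop :=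
  ∃ l : List V, IsListPath G l ∧ {v | v ∈ l} = P

/-- The path cover number `P(G)`: the minimum number of parts in a partition of the
vertex set into sets each inducing a path. -/
noncomputable def pathCoverNumber (G : SimpleGraph V) [Fintype V] [DecidableEq V] : ℕ :=
  sInf {n | ∃ P : Finpartition (Finset.univ : Finset V),
    P.parts.card = n ∧ ∀ p ∈ P.parts, IsInducedPathSet G ↑p}

/-- `G` is 2-connected: at least 3 vertices, connected, and deleting any vertex
leaves a connected graph. -/
def IsTwoConnected (G : SimpleGraph V) [Fintype V] : Prop :=
  3 ≤ Fintype.card V ∧ G.Connected ∧ ∀ v : V, (G.induce {w : V | w ≠ v}).Connected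

/-- `σ` places the vertices of `G` on a circle (in the order given by `Fin`) so that no
two edges, drawn as chords, cross; this witnesses outerplanarity of `G`. -/
def IsOuterplanarEmbedding (G : SimpleGraph V) [Fintype V]
    (σ : V ≃ Fin (Fintype.card V)) : Prop :=
  ∀ a b c d : V, G.Adj a b → G.Adj c d →
    ¬(σ a < σ c ∧ σ c < σ b ∧ σ b < σ d)

/-- A graph is outerplanar iff its vertices can be placed on a circle with all
edges drawn as pairwise non-crossing chords. -/
def IsOuterplanar (G : SimpleGraph V) [Fintype V] : Prop :=
  ∃ σ : V ≃ Fin (Fintype.card V), IsOuterplanarEmbedding G σ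

/-- `v` is the cyclic successor of `u` among the elements of `F`, with respect to the
circular order induced by `σ`. -/
def nextIn {n : ℕ} (σ : V ≃ Fin n) (F : Finset V) (u v : V) : Prop :=
  u ∈ F ∧ v ∈ F ∧ u ≠ v ∧
    ((σ u < σ v ∧ ∀ w ∈ F, σ u < σ w → σ v ≤ σ w) ∨
     ((∀ w ∈ F, σ w ≤ σ u) ∧ (∀ w ∈ F, σ v ≤ σ w)))

/-- `F` is (the vertex set of) a bounded face of the outerplanar embedding `σ` of the
2-connected outerplanar graph `G`: in the circular order, consecutive members of `F`
are exactly the adjacent pairs inside `F` (so `F` spans a chordless polygon). -/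
def IsFace (G : SimpleGraph V) [Fintype V] (σ : V ≃ Fin (Fintype.card V))
    (F : Finset V) : Prop :=
  3 ≤ F.card ∧ ∀ u ∈ F, ∀ v ∈ F,
    (G.Adj u v ↔ (nextIn σ F u v ∨ nextIn σ F v u))

/-- The weak dual of the embedded outerplanar graph `G`: vertices are the bounded
faces, two faces being adjacent iff they share an edge of `G`. -/
def weakDual (G : SimpleGraph V) [Fintype V] (σ : V ≃ Fin (Fintype.card V)) :
    SimpleGraph {F : Finset V // IsFace G σ F} where
  Adj F₁ F₂ := F₁ ≠ F₂ ∧ ∃ u v, G.Adj u v ∧ u ∈ F₁.1 ∧ u ∈ F₂.1 ∧ v ∈ F₁.1 ∧ v ∈ F₂.1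
  symm := by
    refine ⟨?_⟩
    rintro F₁ F₂ ⟨hne, u, v, ha, h1, h2, h3, h4⟩
    exact ⟨hne.symm, u, v, ha, h2, h1, h4, h3⟩
  loopless := by refine ⟨?_⟩; rintro F ⟨hne, -⟩; exact hne rfl

/-- The degree of a face in the weak dual. -/
noncomputable def dualDeg (G : SimpleGraph V) [Fintype V]
    (σ : V ≃ Fin (Fintype.card V)) (F : {F : Finset V // IsFace G σ F}) : ℕ :=
  ((weakDual G σ).neighborSet F).ncard

/-- A leaf face: a face which is a leaf of the weak dual tree. -/
def IsLeafFace (G : SimpleGraph V) [Fintype V] (σ : V ≃ Fin (Fintype.card V))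
    (F : {F : Finset V // IsFace G σ F}) : Prop :=
  dualDeg G σ F = 1

/-- `n_ℓ`: the number of leaves of the weak dual. -/
noncomputable def numDualLeaves (G : SimpleGraph V) [Fintype V]
    (σ : V ≃ Fin (Fintype.card V)) : ℕ :=
  Nat.card {F : {F : Finset V // IsFace G σ F} // IsLeafFace G σ F}

end ZF

section FT
variable {V : Type*} [Fintype V]

/-- Branch faces: faces of weak-dual degree 2 that are adjacent to a leaf face or to
another branch face. -/
inductive IsBranchFace (G : SimpleGraph V) (σ : V ≃ Fin (Fintype.card V)) :
    {F : Finset V // IsFace G σ F} → Prop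
  | leaf (F F' : {F : Finset V // IsFace G σ F}) :
      dualDeg G σ F = 2 → (weakDual G σ).Adj F F' → IsLeafFace G σ F' →
      IsBranchFace G σ F
  | branch (F F' : {F : Finset V // IsFace G σ F}) :
      dualDeg G σ F = 2 → (weakDual G σ).Adj F F' → IsBranchFace G σ F' →
      IsBranchFace G σ F

/-- Limb faces: faces of weak-dual degree at least 3 adjacent to a leaf or branch face. -/
def IsLimbFace (G : SimpleGraph V) (σ : V ≃ Fin (Fintype.card V))
    (F : {F : Finset V // IsFace G σ F}) : Prop :=
  3 ≤ dualDeg G σ F ∧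
    ∃ F', (weakDual G σ).Adj F F' ∧ (IsLeafFace G σ F' ∨ IsBranchFace G σ F')

/-- Trunk faces: faces of weak-dual degree at least 2 that are adjacent to no leaf
face and no branch face. -/
def IsTrunkFace (G : SimpleGraph V) (σ : V ≃ Fin (Fintype.card V))
    (F : {F : Finset V // IsFace G σ F}) : Prop :=
  2 ≤ dualDeg G σ F ∧
    ∀ F', (weakDual G σ).Adj F F' → ¬(IsLeafFace G σ F' ∨ IsBranchFace G σ F')

/-- The vertices of the foliage of `G`: vertices lying on a leaf, branch, or limb face. -/
def foliageSet (G : SimpleGraph V) (σ : V ≃ Fin (Fintype.card V)) : Set V :=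
  {v | ∃ F : {F : Finset V // IsFace G σ F},
    (IsLeafFace G σ F ∨ IsBranchFace G σ F ∨ IsLimbFace G σ F) ∧ v ∈ F.1}

/-- The vertices of the trunk of `G`: vertices lying on a trunk face. -/
def trunkSet (G : SimpleGraph V) (σ : V ≃ Fin (Fintype.card V)) : Set V :=
  {v | ∃ F : {F : Finset V // IsFace G σ F}, IsTrunkFace G σ F ∧ v ∈ F.1}

/-- Boundary vertices: vertices in both the foliage and the trunk. -/
def boundarySet (G : SimpleGraph V) (σ : V ≃ Fin (Fintype.card V)) : Set V :=
  foliageSet G σ ∩ trunkSet G σ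

end FT

/-!
Read `σ` as placing the vertices on a line; the edges are then pairwise non-crossing arcs.
Two-connectivity makes consecutive vertices, and the first and the last vertex, adjacent.
Every face lies under its base, the edge joining its leftmost and rightmost vertices, and is
determined by it: it consists of the vertices under the base that are not hidden under a
shorter arc. Two faces sharing two vertices `x < y` lie on opposite sides of them, so exactly
one of them lies under `x y`, and that one has the smaller span (distance between its extreme
vertices). Hence each face has at most one neighbour of larger span, and each face other than
the one under the outer edge has one, namely the face directly above its base. A graph with
such a height function is a tree: the lowest vertex of a cycle would have two higher
neighbours, and climbing from any vertex ends at the root.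
-/

namespace SimpleGraph

variable {α : Type*} {H : SimpleGraph α}

theorem isAcyclic_of_height (h : α → ℕ) (hne : ∀ ⦃a b⦄, H.Adj a b → h a ≠ h b)
    (huniq : ∀ ⦃a b c⦄, H.Adj a b → H.Adj a c → h a < h b → h a < h c → b = c) :
    H.IsAcyclic := by
  classical
  intro v c hc
  obtain ⟨a, ha, hmin⟩ := c.support.toFinset.exists_min_image h ⟨v, by simp⟩
  rw [List.mem_toFinset] at ha
  have hc' := hc.rotate ha
  have hlt : ∀ x ∈ (c.rotate a ha).support, H.Adj a x → h a < h x := fun x hx hax =>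
    (hmin x (by simpa using hx)).lt_of_ne (hne hax)
  have hsnd := (c.rotate a ha).adj_snd hc'.not_nil
  have hpen := ((c.rotate a ha).adj_penultimate hc'.not_nil).symm
  exact hc'.snd_ne_penultimate <| huniq hsnd hpen
    (hlt _ ((c.rotate a ha).getVert_mem_support _) hsnd)
    (hlt _ ((c.rotate a ha).getVert_mem_support _) hpen)

theorem connected_of_height [Finite α] (h : α → ℕ) (r : α)
    (hup : ∀ a, a ≠ r → ∃ b, H.Adj a b ∧ h a < h b) : H.Connected := by
  have : Nonempty α := ⟨r⟩
  obtain ⟨top, htop⟩ := Finite.exists_max h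
  refine (connected_iff_exists_forall_reachable H).mpr ⟨r, fun a => ?_⟩
  induction a using (measure fun a => h top - h a).wf.induction with
  | h a ih =>
    by_cases har : a = r
    · rw [har]
    · obtain ⟨b, hab, hlt⟩ := hup a har
      have hb : h top - h b < h top - h a := by have := htop b; omega
      exact (ih b hb).trans hab.symm.reachable

theorem isTree_of_height [Finite α] (h : α → ℕ) (r : α) (hne : ∀ ⦃a b⦄, H.Adj a b → h a ≠ h b)
    (huniq : ∀ ⦃a b c⦄, H.Adj a b → H.Adj a c → h a < h b → h a < h c → b = c)
    (hup : ∀ a, a ≠ r → ∃ b, H.Adj a b ∧ h a < h b) : H.IsTree :=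
  ⟨connected_of_height h r hup, isAcyclic_of_height h hne huniq⟩

variable {V : Type*} {G : SimpleGraph V}

theorem exists_adj_minimizing (P : V → V → Prop) (f : V → V → ℕ)
    (h : ∃ a b, G.Adj a b ∧ P a b) :
    ∃ a b, (G.Adj a b ∧ P a b) ∧ ∀ c d, G.Adj c d → P c d → f a b ≤ f c d := by
  obtain ⟨a, b, hab⟩ := h
  obtain ⟨⟨a, b⟩, hab, hmin⟩ := (measure fun p : V × V => f p.1 p.2).wf.has_min
    {p | G.Adj p.1 p.2 ∧ P p.1 p.2} ⟨(a, b), hab⟩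
  exact ⟨a, b, hab, fun c d hcd hP => not_lt.mp (hmin (c, d) ⟨hcd, hP⟩)⟩

theorem Connected.exists_adj_mem_notMem (hG : G.Connected) {u v : V} {S : Set V}
    (hu : u ∈ S) (hv : v ∉ S) : ∃ c d, G.Adj c d ∧ c ∈ S ∧ d ∉ S := by
  obtain ⟨d, -, hd₁, hd₂⟩ := (hG.preconnected u v).some.exists_boundary_dart S hu hv
  exact ⟨_, _, d.adj, hd₁, hd₂⟩

theorem Connected.exists_adj_mem_notMem_of_induce {s : Set V} (hs : (G.induce s).Connected)
    {u v : V} (hu : u ∈ s) (hv : v ∈ s) {S : Set V} (huS : u ∈ S) (hvS : v ∉ S) :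
    ∃ c d, G.Adj c d ∧ c ∈ s ∧ d ∈ s ∧ c ∈ S ∧ d ∉ S := by
  obtain ⟨c, d, hcd, hc, hd⟩ :=
    hs.exists_adj_mem_notMem (u := ⟨u, hu⟩) (v := ⟨v, hv⟩) (S := Subtype.val ⁻¹' S) huS hvS
  exact ⟨c, d, hcd, c.2, d.2, hc, hd⟩

end SimpleGraph

namespace IsOuterplanarEmbedding

variable {V : Type*} [Fintype V] {G : SimpleGraph V} {σ : V ≃ Fin (Fintype.card V)}

theorem adj_of_val_succ (hσ : IsOuterplanarEmbedding G σ) (hconn : G.Connected)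
    (hcut : ∀ v, (G.induce {w | w ≠ v}).Connected) {u v : V}
    (huv : (σ v : ℕ) = σ u + 1) : G.Adj u v := by
  -- an edge crossing the cut between `u` and `v`, of minimal length
  obtain ⟨a, b, ⟨hab, hau, hub⟩, hmin⟩ := exists_adj_minimizing
    (fun a b => σ a ≤ σ u ∧ σ u < σ b) (fun a b => σ b - σ a)
    (by
      obtain ⟨c, d, hcd, hc, hd⟩ := hconn.exists_adj_mem_notMem (u := u) (v := v)
        (S := {z | σ z ≤ σ u}) (le_refl (σ u)) (by simp only [Set.mem_ofPred_eq]; omega)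
      exact ⟨c, d, hcd, hc, not_le.mp hd⟩)
  rcases hau.lt_or_eq with hau | hau
  · -- `G - a` has an edge leaving the vertices strictly between `a` and the cut
    obtain ⟨c, d, hcd, hca, hda, hc, hd⟩ := (hcut a).exists_adj_mem_notMem_of_induce
      (u := u) (v := v) (S := {z | σ a < σ z ∧ σ z ≤ σ u}) (fun h => by subst h; omega)
      (fun h => by subst h; omega) ⟨hau, le_rfl⟩ (by simp only [Set.mem_ofPred_eq]; omega)
    simp only [Set.mem_ofPred_eq, not_and, not_le] at hc hd hca hda
    rcases lt_or_gt_of_ne (σ.injective.ne hda) with hda' | hda'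
    · exact absurd ⟨hda', hc.1, hub.trans_le' hc.2⟩ (hσ d c a b hcd.symm hab)
    · have := hmin c d hcd ⟨hc.2, hd hda'⟩
      exact (hσ a b c d hab hcd ⟨hc.1, by omega, by omega⟩).elim
  · obtain rfl := σ.injective hau
    by_contra hne
    have hbv : σ v < σ b := by have := σ.injective.ne fun h : b = v => hne (h ▸ hab); omega
    -- `G - b` has an edge leaving the vertices strictly between `u` and `b`
    obtain ⟨c, d, hcd, hcb, hdb, hc, hd⟩ := (hcut b).exists_adj_mem_notMem_of_induce
      (u := v) (v := a) (S := {z | σ a < σ z ∧ σ z < σ b}) (fun h => by subst h; omega)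
      (fun h => by subst h; omega) ⟨by omega, hbv⟩ (by simp)
    simp only [Set.mem_ofPred_eq, not_and, not_lt] at hc hd hcb hdb
    rcases lt_trichotomy (σ d) (σ a) with hda | hda | hda
    · exact hσ d c a b hcd.symm hab ⟨hda, hc.1, hc.2⟩
    · obtain rfl := σ.injective hda
      have := hmin d c hcd.symm ⟨le_rfl, hc.1⟩
      omega
    · exact hσ a b c d hab hcd ⟨hc.1, hc.2, (hd hda).lt_of_ne (σ.injective.ne hdb).symm⟩

theorem adj_of_val_eq_zero_of_val_add_one_eq_card (hσ : IsOuterplanarEmbedding G σ)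
    (hconn : G.Connected) (hcut : ∀ v, (G.induce {w | w ≠ v}).Connected) {u v : V} (huv : u ≠ v)
    (hu : (σ u : ℕ) = 0) (hv : (σ v : ℕ) + 1 = Fintype.card V) : G.Adj u v := by
  classical
  obtain ⟨c, d, hcd, rfl, hd⟩ := hconn.exists_adj_mem_notMem (S := {u}) rfl huv.symm
  obtain ⟨b, hb, hbmax⟩ := (Finset.univ.filter (G.Adj c)).exists_max_image σ
    ⟨d, by simpa using hcd⟩
  simp only [Finset.mem_filter, Finset.mem_univ, true_and] at hb hbmax
  by_contra hne
  have hbv : σ b < σ v := by have := σ.injective.ne (fun h : b = v => hne (h ▸ hb)); omega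
  -- `G - b` has an edge leaving the vertices to the right of `b`
  obtain ⟨e, f, hef, heb, hfb, he, hf⟩ := (hcut b).exists_adj_mem_notMem_of_induce
    (u := v) (v := c) (S := {z | σ b < σ z}) (fun h => by subst h; omega) hb.ne
    hbv (by simp only [Set.mem_ofPred_eq]; omega)
  simp only [Set.mem_ofPred_eq, not_lt] at he hf heb hfb
  by_cases hfc : f = c
  · subst hfc
    exact absurd (hbmax e hef.symm) (not_le.mpr he)
  · have := σ.injective.ne hfc
    have := σ.injective.ne hfb
    exact hσ c b f e hb hef.symm ⟨by omega, by omega, he⟩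

end IsOuterplanarEmbedding

section Faces

variable {V : Type*}

theorem nextIn_or_nextIn_iff {n : ℕ} {σ : V ≃ Fin n} {F : Finset V} {u v : V} (hu : u ∈ F)
    (hv : v ∈ F) (huv : σ u < σ v) :
    nextIn σ F u v ∨ nextIn σ F v u ↔
      (∀ t ∈ F, σ t ≤ σ u ∨ σ v ≤ σ t) ∨ ∀ t ∈ F, σ u ≤ σ t ∧ σ t ≤ σ v := by
  have hne : u ≠ v := fun h => (h ▸ huv).false
  constructor
  · rintro (⟨-, -, -, ⟨-, h⟩ | ⟨h, -⟩⟩ | ⟨-, -, -, ⟨h, -⟩ | ⟨h₁, h₂⟩⟩)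
    · exact Or.inl fun t ht => (le_or_gt (σ t) (σ u)).imp_right (h t ht)
    · exact absurd (h v hv) (not_le.mpr huv)
    · exact absurd h (asymm huv)
    · exact Or.inr fun t ht => ⟨h₂ t ht, h₁ t ht⟩
  · rintro (h | h)
    · exact Or.inl ⟨hu, hv, hne,
        Or.inl ⟨huv, fun w hw hlt => (h w hw).resolve_left (not_le.mpr hlt)⟩⟩
    · exact Or.inr ⟨hv, hu, hne.symm, Or.inr ⟨fun w hw => (h w hw).2, fun w hw => (h w hw).1⟩⟩

variable [Fintype V] {G : SimpleGraph V} {σ : V ≃ Fin (Fintype.card V)}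

abbrev LiesUnder (σ : V ≃ Fin (Fintype.card V)) (F : Finset V) (x y : V) : Prop :=
  ∀ t ∈ F, σ x ≤ σ t ∧ σ t ≤ σ y

theorem isFace_iff {F : Finset V} :
    IsFace G σ F ↔ 3 ≤ F.card ∧ ∀ u ∈ F, ∀ v ∈ F, σ u < σ v →
      (G.Adj u v ↔ (∀ t ∈ F, σ t ≤ σ u ∨ σ v ≤ σ t) ∨ LiesUnder σ F u v) := by
  refine and_congr_right fun _ => ⟨fun h u hu v hv huv =>
    (h u hu v hv).trans (nextIn_or_nextIn_iff hu hv huv), fun h u hu v hv => ?_⟩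
  rcases lt_trichotomy (σ u) (σ v) with huv | huv | huv
  · exact (h u hu v hv huv).trans (nextIn_or_nextIn_iff hu hv huv).symm
  · obtain rfl := σ.injective huv
    simp [nextIn]
  · rw [G.adj_comm, or_comm]
    exact (h v hv u hu huv).trans (nextIn_or_nextIn_iff hv hu huv).symm

namespace IsFace

variable {F : Finset V}

theorem exists_base (hF : IsFace G σ F) :
    ∃ m ∈ F, ∃ M ∈ F, σ m < σ M ∧ G.Adj m M ∧ LiesUnder σ F m M := by
  have hne : F.Nonempty := Finset.card_pos.mp (by have := hF.1; omega)
  obtain ⟨m, hm, hmin⟩ := F.exists_min_image σ hne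
  obtain ⟨M, hM, hmax⟩ := F.exists_max_image σ hne
  obtain ⟨a, ha, b, hb, hab⟩ := (Finset.one_lt_card (s := F)).mp (by have := hF.1; omega)
  have hmM : σ m < σ M := by
    have := σ.injective.ne hab; have := hmin a ha; have := hmin b hb
    have := hmax a ha; have := hmax b hb; omega
  have hunder : LiesUnder σ F m M := fun t ht => ⟨hmin t ht, hmax t ht⟩
  exact ⟨m, hm, M, hM, hmM, ((isFace_iff.mp hF).2 m hm M hM hmM).mpr (Or.inr hunder), hunder⟩

theorem exists_mem_between (hF : IsFace G σ F) {m M : V} (hunder : LiesUnder σ F m M) :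
    ∃ t ∈ F, σ m < σ t ∧ σ t < σ M := by
  classical
  obtain ⟨t, ht⟩ : ((F.erase m).erase M).Nonempty := Finset.card_pos.mp <| by
    have := Finset.pred_card_le_card_erase (s := F) (a := m)
    have := Finset.pred_card_le_card_erase (s := F.erase m) (a := M)
    have := hF.1; omega
  simp only [Finset.mem_erase] at ht
  obtain ⟨htM, htm, ht⟩ := ht
  have := σ.injective.ne htm; have := σ.injective.ne htM; have := hunder t ht
  exact ⟨t, ht, by omega, by omega⟩

theorem exists_adj_across (hF : IsFace G σ F) {p₀ q₀ : V} (hp₀ : p₀ ∈ F) (hq₀ : q₀ ∈ F) (k : ℕ)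
    (hp₀k : σ p₀ ≤ k) (hkq₀ : k < σ q₀) :
    ∃ p ∈ F, ∃ q ∈ F, (σ p : ℕ) ≤ k ∧ k < σ q ∧ G.Adj p q ∧ ∀ t ∈ F, σ t ≤ σ p ∨ σ q ≤ σ t := by
  classical
  obtain ⟨p, hp, hpmax⟩ := (F.filter fun t => (σ t : ℕ) ≤ k).exists_max_image σ
    ⟨p₀, Finset.mem_filter.mpr ⟨hp₀, hp₀k⟩⟩
  obtain ⟨q, hq, hqmin⟩ := (F.filter fun t => k < (σ t : ℕ)).exists_min_image σ
    ⟨q₀, Finset.mem_filter.mpr ⟨hq₀, hkq₀⟩⟩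
  rw [Finset.mem_filter] at hp hq
  have hgap : ∀ t ∈ F, σ t ≤ σ p ∨ σ q ≤ σ t := fun t ht =>
    (le_or_gt (σ t : ℕ) k).imp (fun h => hpmax t (Finset.mem_filter.mpr ⟨ht, h⟩))
      (fun h => hqmin t (Finset.mem_filter.mpr ⟨ht, h⟩))
  refine ⟨p, hp.1, q, hq.1, hp.2, hq.2, ?_, hgap⟩
  exact ((isFace_iff.mp hF).2 p hp.1 q hq.1 (by omega)).mpr (Or.inl hgap)

theorem liesUnder_of_mem (hσ : IsOuterplanarEmbedding G σ) (hF : IsFace G σ F) {a b w : V}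
    (hab : G.Adj a b) (hw : w ∈ F) (haw : σ a < σ w) (hwb : σ w < σ b) : LiesUnder σ F a b := by
  have ha : (∃ t ∈ F, σ t ≤ σ a) → a ∈ F := by
    rintro ⟨t, ht, hta⟩
    obtain ⟨p, hp, q, hq, hpa, haq, hpq, hgap⟩ := hF.exists_adj_across ht hw (σ a) hta haw
    have hqw : σ q ≤ σ w := (hgap w hw).resolve_left (by omega)
    rcases (show σ p ≤ σ a from hpa).lt_or_eq with hpa | hpa
    · exact (hσ p q a b hpq hab ⟨hpa, haq, hqw.trans_lt hwb⟩).elim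
    · exact σ.injective hpa ▸ hp
  have hb : (∃ t ∈ F, σ b ≤ σ t) → b ∈ F := by
    rintro ⟨t, ht, hbt⟩
    obtain ⟨p, hp, q, hq, hpb, hbq, hpq, hgap⟩ :=
      hF.exists_adj_across hw ht (σ b - 1) (by omega) (by omega)
    have hwp : σ w ≤ σ p := (hgap w hw).resolve_right (by omega)
    rcases (show σ b ≤ σ q by omega).lt_or_eq with hbq | hbq
    · exact (hσ a b p q hab hpq ⟨haw.trans_le hwp, by omega, hbq⟩).elim
    · exact σ.injective hbq ▸ hq
  -- if `F` reaches both sides of `a b`, then `a b` is a side of `F`; if only one side, the base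
  -- `m M` of `F` crosses `a b`
  obtain ⟨m, hm, M, hM, -, hmM, hunder⟩ := hF.exists_base
  by_cases hA : ∃ t ∈ F, σ t ≤ σ a <;> by_cases hB : ∃ t ∈ F, σ b ≤ σ t
  · rcases ((isFace_iff.mp hF).2 a (ha hA) b (hb hB) (haw.trans hwb)).mp hab with hgap | h
    · rcases hgap w hw with h | h <;> omega
    · exact h
  · push Not at hB
    refine fun t ht => ⟨not_lt.mp fun hta => ?_, (hB t ht).le⟩
    have := hunder t ht; have := hunder w hw; have := hB M hM
    exact hσ m M a b hmM hab ⟨by omega, by omega, by omega⟩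
  · push Not at hA
    refine fun t ht => ⟨(hA t ht).le, not_lt.mp fun hbt => ?_⟩
    have := hunder t ht; have := hunder w hw; have := hA m hm
    exact hσ a b m M hab hmM ⟨by omega, by omega, by omega⟩
  · push Not at hA hB
    exact fun t ht => ⟨(hA t ht).le, (hB t ht).le⟩

theorem liesUnder_of_mem_mem (hσ : IsOuterplanarEmbedding G σ) (hF : IsFace G σ F)
    {m M x y : V} (hmM : G.Adj m M) (hx : x ∈ F) (hy : y ∈ F) (hmx : σ m ≤ σ x)
    (hxy : σ x < σ y) (hyM : σ y ≤ σ M) (hne : ¬(m = x ∧ M = y)) : LiesUnder σ F m M := by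
  rcases hmx.lt_or_eq with hmx | hmx
  · exact hF.liesUnder_of_mem hσ hmM hx hmx (hxy.trans_le hyM)
  · obtain rfl := σ.injective hmx
    have hyM : σ y < σ M := hyM.lt_of_ne fun h => hne ⟨rfl, σ.injective h.symm⟩
    exact hF.liesUnder_of_mem hσ hmM hy hxy hyM

end IsFace

end Faces

section FaceUnder

variable {V : Type*} [Fintype V] {G : SimpleGraph V} {σ : V ≃ Fin (Fintype.card V)}

def IsCovered (G : SimpleGraph V) (σ : V ≃ Fin (Fintype.card V)) (x y z : V) : Prop :=
  ∃ c d, G.Adj c d ∧ σ x ≤ σ c ∧ σ c < σ z ∧ σ z < σ d ∧ σ d ≤ σ y ∧ ¬(c = x ∧ d = y)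

/-- For an edge `x y` with a vertex strictly between its ends, this is the face directly under
it. -/
noncomputable def faceUnder (G : SimpleGraph V) (σ : V ≃ Fin (Fintype.card V)) (x y : V) :
    Finset V := by
  classical
  exact Finset.univ.filter fun z => σ x ≤ σ z ∧ σ z ≤ σ y ∧ ¬IsCovered G σ x y z

variable {x y : V}

theorem mem_faceUnder {z : V} :
    z ∈ faceUnder G σ x y ↔ σ x ≤ σ z ∧ σ z ≤ σ y ∧ ¬IsCovered G σ x y z := by
  simp [faceUnder]

theorem liesUnder_faceUnder : LiesUnder σ (faceUnder G σ x y) x y :=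
  fun _ ht => ⟨(mem_faceUnder.mp ht).1, (mem_faceUnder.mp ht).2.1⟩

theorem left_mem_faceUnder (hxy : σ x ≤ σ y) : x ∈ faceUnder G σ x y :=
  mem_faceUnder.mpr ⟨le_rfl, hxy, fun ⟨_, _, _, hxc, hcx, _⟩ => (hxc.trans_lt hcx).false⟩

theorem right_mem_faceUnder (hxy : σ x ≤ σ y) : y ∈ faceUnder G σ x y :=
  mem_faceUnder.mpr ⟨hxy, le_rfl, fun ⟨_, _, _, _, _, hyd, hdy, _⟩ => (hyd.trans_le hdy).false⟩

theorem adj_of_gap_faceUnder (hσ : IsOuterplanarEmbedding G σ) {u v w : V}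
    (hu : u ∈ faceUnder G σ x y) (hv : v ∈ faceUnder G σ x y) (huw : σ u < σ w)
    (hwv : σ w < σ v) (hgap : ∀ t ∈ faceUnder G σ x y, σ t ≤ σ u ∨ σ v ≤ σ t) :
    G.Adj u v ∧ ¬(u = x ∧ v = y) := by
  rw [mem_faceUnder] at hu hv
  -- since `u` and `v` are not covered, the arcs covering the vertices between them stay between
  have hcov : ∀ t, σ u < σ t → σ t < σ v → ∃ c d, G.Adj c d ∧ σ u ≤ σ c ∧ σ c < σ t ∧
      σ t < σ d ∧ σ d ≤ σ v ∧ ¬(c = x ∧ d = y) := by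
    intro t hut htv
    have ht : t ∉ faceUnder G σ x y := fun ht => by rcases hgap t ht with h | h <;> omega
    rw [mem_faceUnder, not_and, not_and, not_not] at ht
    obtain ⟨c, d, hcd, hxc, hct, htd, hdy, hne⟩ := ht (by omega) (by omega)
    refine ⟨c, d, hcd, not_lt.mp fun h => hu.2.2 ?_, hct, htd, not_lt.mp fun h => hv.2.2 ?_, hne⟩
    · exact ⟨c, d, hcd, hxc, h, by omega, hdy, hne⟩
    · exact ⟨c, d, hcd, hxc, by omega, h, hdy, hne⟩
  -- the widest such arc joins `u` and `v`
  obtain ⟨a, b, ⟨hab, hua, hab', hbv, hne⟩, hmin⟩ := exists_adj_minimizing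
    (fun a b => σ u ≤ σ a ∧ σ a < σ b ∧ σ b ≤ σ v ∧ ¬(a = x ∧ b = y))
    (fun a b => (σ a - σ u) + (σ v - σ b))
    (by
      obtain ⟨c, d, hcd, huc, hcw, hwd, hdv, hne⟩ := hcov w huw hwv
      exact ⟨c, d, hcd, huc, hcw.trans hwd, hdv, hne⟩)
  have hau : a = u := by
    refine σ.injective (le_antisymm (not_lt.mp fun hua' => ?_) hua)
    obtain ⟨c, d, hcd, huc, hca, had, hdv, hne'⟩ := hcov a hua' (by omega)
    rcases lt_or_ge (σ d) (σ b) with hdb | hbd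
    · exact hσ c d a b hcd hab ⟨hca, had, hdb⟩
    · have := hmin c d hcd ⟨huc, hca.trans had, hdv, hne'⟩
      omega
  have hbv : b = v := by
    refine σ.injective (le_antisymm hbv (not_lt.mp fun hbv' => ?_))
    obtain ⟨c, d, hcd, huc, hcb, hbd, hdv, hne'⟩ := hcov b (by omega) hbv'
    rcases lt_or_ge (σ a) (σ c) with hac | hca
    · exact hσ a b c d hab hcd ⟨hac, hcb, hbd⟩
    · have := hmin c d hcd ⟨huc, hcb.trans hbd, hdv, hne'⟩
      omega
  subst hau hbv
  exact ⟨hab, hne⟩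

theorem isFace_faceUnder (hσ : IsOuterplanarEmbedding G σ)
    (hsucc : ∀ u v, (σ v : ℕ) = σ u + 1 → G.Adj u v) (hxy : G.Adj x y) {w : V}
    (hxw : σ x < σ w) (hwy : σ w < σ y) : IsFace G σ (faceUnder G σ x y) := by
  have hx := left_mem_faceUnder (G := G) (hxw.trans hwy).le
  have hy := right_mem_faceUnder (G := G) (hxw.trans hwy).le
  refine isFace_iff.mpr ⟨?_, fun u hu v hv huv => ⟨fun hadj => ?_, fun hside => ?_⟩⟩
  · obtain ⟨t, ht, hxt, hty⟩ : ∃ t ∈ faceUnder G σ x y, σ x < σ t ∧ σ t < σ y := by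
      by_contra! h
      exact (adj_of_gap_faceUnder hσ hx hy hxw hwy fun t ht =>
        (le_or_gt (σ t) (σ x)).imp_right (h t ht)).2 ⟨rfl, rfl⟩
    refine Finset.two_lt_card.mpr ⟨x, hx, y, hy, t, ht, ?_, ?_, ?_⟩ <;>
      rintro rfl <;> simp_all
  · by_cases hxy' : u = x ∧ v = y
    · obtain ⟨rfl, rfl⟩ := hxy'
      exact Or.inr liesUnder_faceUnder
    · refine Or.inl fun t ht => ?_
      by_contra! h
      exact (mem_faceUnder.mp ht).2.2
        ⟨u, v, hadj, (mem_faceUnder.mp hu).1, h.1, h.2, (mem_faceUnder.mp hv).2.1, hxy'⟩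
  · rcases hside with hgap | hunder
    · by_cases hbetween : ∃ w, σ u < σ w ∧ σ w < σ v
      · obtain ⟨w, huw, hwv⟩ := hbetween
        exact (adj_of_gap_faceUnder hσ hu hv huw hwv hgap).1
      · push Not at hbetween
        refine hsucc u v (le_antisymm ?_ huv)
        have := hbetween (σ.symm ⟨σ u + 1, by omega⟩)
        simp only [Equiv.apply_symm_apply, Fin.lt_def, Fin.le_def] at this
        omega
    · have := hunder x hx; have := hunder y hy
      have := liesUnder_faceUnder u hu; have := liesUnder_faceUnder v hv
      obtain rfl : u = x := σ.injective (by omega)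
      obtain rfl : v = y := σ.injective (by omega)
      exact hxy

end FaceUnder

namespace IsFace

variable {V : Type*} [Fintype V] {G : SimpleGraph V} {σ : V ≃ Fin (Fintype.card V)}
  {F F' : Finset V} {x y : V}

theorem eq_faceUnder (hσ : IsOuterplanarEmbedding G σ) (hF : IsFace G σ F) {m M : V}
    (hm : m ∈ F) (hM : M ∈ F) (hunder : LiesUnder σ F m M) : F = faceUnder G σ m M := by
  ext z
  rw [mem_faceUnder]
  constructor
  · refine fun hz => ⟨(hunder z hz).1, (hunder z hz).2, ?_⟩
    rintro ⟨c, d, hcd, hmc, hcz, hzd, hdM, hne⟩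
    have hcd' := hF.liesUnder_of_mem hσ hcd hz hcz hzd
    exact hne ⟨σ.injective (le_antisymm (hcd' m hm).1 hmc),
      σ.injective (le_antisymm hdM (hcd' M hM).2)⟩
  · rintro ⟨hmz, hzM, hnc⟩
    by_contra hz
    have hzM : σ z < σ M := hzM.lt_of_ne fun h => hz (σ.injective h ▸ hM)
    obtain ⟨p, hp, q, hq, hpz, hzq, hpq, hgap⟩ := hF.exists_adj_across hm hM (σ z) hmz hzM
    obtain ⟨t, ht, hmt, htM⟩ := hF.exists_mem_between hunder
    refine hnc ⟨p, q, hpq, (hunder p hp).1, ?_, hzq, (hunder q hq).2, ?_⟩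
    · exact (show σ p ≤ σ z from hpz).lt_of_ne fun h => hz (σ.injective h ▸ hp)
    · rintro ⟨rfl, rfl⟩
      rcases hgap t ht with h | h <;> omega

theorem eq_of_liesUnder (hσ : IsOuterplanarEmbedding G σ) (hF : IsFace G σ F)
    (hF' : IsFace G σ F') (hx : x ∈ F) (hy : y ∈ F) (hx' : x ∈ F') (hy' : y ∈ F')
    (hunder : LiesUnder σ F x y) (hunder' : LiesUnder σ F' x y) : F = F' :=
  (hF.eq_faceUnder hσ hx hy hunder).trans (hF'.eq_faceUnder hσ hx' hy' hunder').symm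

theorem eq_of_not_liesUnder (hσ : IsOuterplanarEmbedding G σ) (hF : IsFace G σ F)
    (hF' : IsFace G σ F') (hx : x ∈ F) (hy : y ∈ F) (hx' : x ∈ F') (hy' : y ∈ F')
    (hxy : σ x < σ y) (hn : ¬LiesUnder σ F x y) (hn' : ¬LiesUnder σ F' x y) : F = F' := by
  -- each face lies under the base of the other one
  obtain ⟨m, hm, M, hM, -, hmM, hunder⟩ := hF.exists_base
  obtain ⟨m', hm', M', hM', -, hmM', hunder'⟩ := hF'.exists_base
  have h₁ := hF'.liesUnder_of_mem_mem hσ hmM hx' hy' (hunder x hx).1 hxy (hunder y hy).2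
    (by rintro ⟨rfl, rfl⟩; exact hn hunder)
  have h₂ := hF.liesUnder_of_mem_mem hσ hmM' hx hy (hunder' x hx').1 hxy (hunder' y hy').2
    (by rintro ⟨rfl, rfl⟩; exact hn' hunder')
  obtain rfl : m = m' := σ.injective (le_antisymm (h₁ m' hm').1 (h₂ m hm).1)
  obtain rfl : M = M' := σ.injective (le_antisymm (h₂ M hM).2 (h₁ M' hM').2)
  exact hF.eq_of_liesUnder hσ hF' hm hM hm' hM' hunder hunder'

theorem liesUnder_iff_not_liesUnder (hσ : IsOuterplanarEmbedding G σ) (hF : IsFace G σ F)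
    (hF' : IsFace G σ F') (hne : F ≠ F') (hx : x ∈ F) (hy : y ∈ F) (hx' : x ∈ F')
    (hy' : y ∈ F') (hxy : σ x < σ y) : LiesUnder σ F x y ↔ ¬LiesUnder σ F' x y :=
  ⟨fun h h' => hne (hF.eq_of_liesUnder hσ hF' hx hy hx' hy' h h'),
    fun h' => by_contra fun h => hne (hF.eq_of_not_liesUnder hσ hF' hx hy hx' hy' hxy h h')⟩

end IsFace

section Span

variable {V : Type*} [Fintype V] {G : SimpleGraph V} {σ : V ≃ Fin (Fintype.card V)}
  {F A : Finset V} {x y : V}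

/-- The largest position in `F` minus the smallest one (`0` for `F = ∅`). -/
def faceSpan (σ : V ≃ Fin (Fintype.card V)) (F : Finset V) : ℕ :=
  F.sup fun a => F.sup fun b => (σ b : ℕ) - σ a

theorem faceSpan_eq (hx : x ∈ F) (hy : y ∈ F) (hunder : LiesUnder σ F x y) :
    faceSpan σ F = σ y - σ x := by
  refine le_antisymm (Finset.sup_le fun a ha => Finset.sup_le fun b hb => ?_) ?_
  · have := hunder a ha; have := hunder b hb; omega
  · exact (Finset.le_sup (f := fun b => (σ b : ℕ) - σ x) hy).trans
      (Finset.le_sup (f := fun a => F.sup fun b => (σ b : ℕ) - σ a) hx)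

theorem IsFace.faceSpan_lt (hσ : IsOuterplanarEmbedding G σ) (hF : IsFace G σ F)
    (hA : IsFace G σ A) (hne : F ≠ A) (hx : x ∈ F) (hy : y ∈ F) (hxA : x ∈ A) (hyA : y ∈ A)
    (hxy : σ x < σ y) (hunder : LiesUnder σ F x y) : faceSpan σ F < faceSpan σ A := by
  obtain ⟨m, hm, M, hM, -, -, hunderA⟩ := hA.exists_base
  rw [faceSpan_eq hx hy hunder, faceSpan_eq hm hM hunderA]
  have := hunderA x hxA; have := hunderA y hyA
  by_contra hle
  obtain rfl : m = x := σ.injective (by omega)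
  obtain rfl : M = y := σ.injective (by omega)
  exact hne (hF.eq_of_liesUnder hσ hA hx hy hxA hyA hunder hunderA)

end Span

section WeakDual

variable {V : Type*} [Fintype V] {G : SimpleGraph V} {σ : V ≃ Fin (Fintype.card V)}
  {F A B : {F : Finset V // IsFace G σ F}}

theorem exists_mem_mem_of_weakDual_adj (h : (weakDual G σ).Adj F A) :
    ∃ x y, σ x < σ y ∧ x ∈ F.1 ∧ y ∈ F.1 ∧ x ∈ A.1 ∧ y ∈ A.1 := by
  obtain ⟨-, u, v, huv, hu, huA, hv, hvA⟩ := h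
  rcases lt_or_gt_of_ne (σ.injective.ne huv.ne) with h | h
  · exact ⟨u, v, h, hu, hv, huA, hvA⟩
  · exact ⟨v, u, h, hv, hu, hvA, huA⟩

theorem faceSpan_ne_of_weakDual_adj (hσ : IsOuterplanarEmbedding G σ)
    (h : (weakDual G σ).Adj F A) : faceSpan σ F.1 ≠ faceSpan σ A.1 := by
  obtain ⟨x, y, hxy, hx, hy, hxA, hyA⟩ := exists_mem_mem_of_weakDual_adj h
  have hne : F.1 ≠ A.1 := Subtype.coe_injective.ne h.1
  have hiff := F.2.liesUnder_iff_not_liesUnder hσ A.2 hne hx hy hxA hyA hxy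
  by_cases hF : LiesUnder σ F.1 x y
  · exact (F.2.faceSpan_lt hσ A.2 hne hx hy hxA hyA hxy hF).ne
  · exact (A.2.faceSpan_lt hσ F.2 hne.symm hxA hyA hx hy hxy (not_not.mp (mt hiff.mpr hF))).ne'

theorem exists_base_of_weakDual_adj_of_faceSpan_lt (hσ : IsOuterplanarEmbedding G σ)
    (h : (weakDual G σ).Adj F A) (hlt : faceSpan σ F.1 < faceSpan σ A.1) :
    ∃ x y, σ x < σ y ∧ x ∈ F.1 ∧ y ∈ F.1 ∧ x ∈ A.1 ∧ y ∈ A.1 ∧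
      LiesUnder σ F.1 x y ∧ ¬LiesUnder σ A.1 x y := by
  obtain ⟨x, y, hxy, hx, hy, hxA, hyA⟩ := exists_mem_mem_of_weakDual_adj h
  have hne : F.1 ≠ A.1 := Subtype.coe_injective.ne h.1
  have hiff := F.2.liesUnder_iff_not_liesUnder hσ A.2 hne hx hy hxA hyA hxy
  refine ⟨x, y, hxy, hx, hy, hxA, hyA, not_not.mp fun hF => ?_, fun hA => ?_⟩
  · exact (A.2.faceSpan_lt hσ F.2 hne.symm hxA hyA hx hy hxy
      (not_not.mp (mt hiff.mpr hF))).not_gt hlt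
  · exact (A.2.faceSpan_lt hσ F.2 hne.symm hxA hyA hx hy hxy hA).not_gt hlt

theorem eq_of_weakDual_adj_of_faceSpan_lt (hσ : IsOuterplanarEmbedding G σ)
    (hA : (weakDual G σ).Adj F A) (hB : (weakDual G σ).Adj F B)
    (hFA : faceSpan σ F.1 < faceSpan σ A.1) (hFB : faceSpan σ F.1 < faceSpan σ B.1) : A = B := by
  obtain ⟨x, y, hxy, hx, hy, hxA, hyA, hF, hnA⟩ :=
    exists_base_of_weakDual_adj_of_faceSpan_lt hσ hA hFA
  obtain ⟨x', y', -, hx', hy', hxB, hyB, hF', hnB⟩ :=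
    exists_base_of_weakDual_adj_of_faceSpan_lt hσ hB hFB
  obtain rfl : x = x' := σ.injective (le_antisymm (hF x' hx').1 (hF' x hx).1)
  obtain rfl : y = y' := σ.injective (le_antisymm (hF' y hy).2 (hF y' hy').2)
  exact Subtype.ext (A.2.eq_of_not_liesUnder hσ B.2 hxA hyA hxB hyB hxy hnA hnB)

/-- The face directly above the base `m M` of `F`: the one under the shortest arc `c d`
enclosing `m M`. -/
theorem IsFace.exists_weakDual_adj_faceSpan_lt (hσ : IsOuterplanarEmbedding G σ)
    (hsucc : ∀ u v, (σ v : ℕ) = σ u + 1 → G.Adj u v) {F : Finset V} (hF : IsFace G σ F)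
    {a b : V} (hab : G.Adj a b) (hunder : LiesUnder σ F a b) (hnot : ¬(a ∈ F ∧ b ∈ F)) :
    ∃ A, (weakDual G σ).Adj ⟨F, hF⟩ A ∧ faceSpan σ F < faceSpan σ A.1 := by
  obtain ⟨m, hm, M, hM, hmM, hadj, hunderF⟩ := hF.exists_base
  obtain ⟨c, d, ⟨hcd, hcm, hMd, hne⟩, hmin⟩ := exists_adj_minimizing
    (fun c d => σ c ≤ σ m ∧ σ M ≤ σ d ∧ ¬(c = m ∧ d = M)) (fun c d => σ d - σ c)
    ⟨a, b, hab, (hunder m hm).1, (hunder M hM).2, by rintro ⟨rfl, rfl⟩; exact hnot ⟨hm, hM⟩⟩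
  have hmA : m ∈ faceUnder G σ c d := by
    refine mem_faceUnder.mpr ⟨hcm, by omega, ?_⟩
    rintro ⟨e, f, hef, hce, hem, hmf, hfd, hne'⟩
    rcases lt_or_ge (σ f) (σ M) with hfM | hMf
    · exact hσ e f m M hef hadj ⟨hem, hmf, hfM⟩
    · have := hmin e f hef ⟨hem.le, hMf, fun h => (h.1 ▸ hem).false⟩
      exact hne' ⟨σ.injective (by omega), σ.injective (by omega)⟩
  have hMA : M ∈ faceUnder G σ c d := by
    refine mem_faceUnder.mpr ⟨by omega, hMd, ?_⟩
    rintro ⟨e, f, hef, hce, heM, hMf, hfd, hne'⟩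
    rcases lt_or_ge (σ m) (σ e) with hme | hem
    · exact hσ m M e f hadj hef ⟨hme, heM, hMf⟩
    · have := hmin e f hef ⟨hem, hMf.le, fun h => (h.2 ▸ hMf).false⟩
      exact hne' ⟨σ.injective (by omega), σ.injective (by omega)⟩
  have hA : IsFace G σ (faceUnder G σ c d) := by
    rcases hcm.lt_or_eq with hcm' | hcm'
    · exact isFace_faceUnder hσ hsucc hcd hcm' (hmM.trans_le hMd)
    · have hMd' : σ M < σ d := hMd.lt_of_ne fun h => hne ⟨σ.injective hcm', σ.injective h.symm⟩
      exact isFace_faceUnder hσ hsucc hcd (hcm.trans_lt hmM) hMd'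
  have hAF : F ≠ faceUnder G σ c d := by
    rintro rfl
    have hc := hunderF c (left_mem_faceUnder (hcm.trans (hmM.le.trans hMd)))
    have hd := hunderF d (right_mem_faceUnder (hcm.trans (hmM.le.trans hMd)))
    exact hne ⟨σ.injective (le_antisymm hcm hc.1), σ.injective (le_antisymm hd.2 hMd)⟩
  exact ⟨⟨_, hA⟩, ⟨fun h => hAF (congrArg Subtype.val h), m, M, hadj, hm, hmA, hM, hMA⟩,
    hF.faceSpan_lt hσ hA hAF hm hM hmA hMA hmM hunderF⟩

end WeakDual

/-- The weak dual of a 2-connected outerplanar graph (with respect to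
any outerplanar embedding) is a tree. -/
theorem weakDual_isTree {V : Type*} [Fintype V] (G : SimpleGraph V)
    (h2 : IsTwoConnected G) (σ : V ≃ Fin (Fintype.card V))
    (hσ : IsOuterplanarEmbedding G σ) : (weakDual G σ).IsTree := by
  obtain ⟨hcard, hconn, hcut⟩ := h2
  have hsucc : ∀ u v, (σ v : ℕ) = σ u + 1 → G.Adj u v := fun u v =>
    hσ.adj_of_val_succ hconn hcut
  set first := σ.symm ⟨0, by omega⟩
  set second := σ.symm ⟨1, by omega⟩
  set last := σ.symm ⟨Fintype.card V - 1, by omega⟩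
  have hpos : ∀ t, σ first ≤ σ t ∧ σ t ≤ σ last := fun t => by
    simp only [first, last, Equiv.apply_symm_apply, Fin.le_def]; omega
  have hfl : G.Adj first last := hσ.adj_of_val_eq_zero_of_val_add_one_eq_card hconn hcut
    (fun h => by have := congrArg (fun v => (σ v : ℕ)) h; simp [first, last] at this; omega)
    (by simp [first]) (by simp [last]; omega)
  have hroot := isFace_faceUnder hσ hsucc hfl (w := second) (by simp [first, second])
    (by simp [second, last, Fin.lt_def]; omega)
  refine isTree_of_height (fun F => faceSpan σ F.1) ⟨_, hroot⟩
    (fun _ _ h => faceSpan_ne_of_weakDual_adj hσ h)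
    (fun _ _ _ hA hB hFA hFB => eq_of_weakDual_adj_of_faceSpan_lt hσ hA hB hFA hFB)
    (fun F hF => F.2.exists_weakDual_adj_faceSpan_lt hσ hsucc hfl (fun t _ => hpos t) ?_)
  exact fun ⟨h₁, h₂⟩ => hF (Subtype.ext (F.2.eq_faceUnder hσ h₁ h₂ fun t _ => hpos t))
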